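/- Fix an integer k ≠ 0 and a real α ≥ 1. For every sufficiently smooth function f : [0,1) → ℂ with finite H¹ norm satisfying the no-flux boundary condition ∂_r f(1) = 0, the advection term B f = i r^α f and the radial Laplacian Δ_k = ∂_rr + (1/r)∂_r − k²/r² satisfy Re⟨B f, Δ_k f⟩ = −α Re⟨i r^{α−1} f, ∂_r f⟩ and hence |Re⟨B f, Δ_k f⟩| ≤ α ‖f‖_H ‖f‖_{H¹}. -/

import Mathlib

/-!
Put `G = Re (i f conj ∂_r f)`. Since `i |∂_r f|²` and `i |f|²` are purely imaginary, `G' = Re (i f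
conj ∂_rr f)` and the `k²`-term of `Re⟨B f, Δ_k f⟩` drops out, leaving `∫₀¹ (r^(α+1) G' + r^α G)`.
Integrating the first term by parts, the boundary term vanishes at `0` because of the weight and at
`1` because `∂_r f(1) = 0`, so the total is `-α ∫₀¹ r^α G = -α Re⟨i r^(α-1) f, ∂_r f⟩`. The bound
is Cauchy–Schwarz in `H`, together with `r^(α-1) ≤ 1` on `[0,1]` and `‖∂_r f‖_H ≤ ‖f‖_{H¹}`.
-/

open MeasureTheory intervalIntegral

noncomputable section

/-- Weighted `L²((0,1); r dr)` norm. -/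
def wL2 (φ : ℝ → ℂ) : ℝ :=
  Real.sqrt (∫ r in (0 : ℝ)..1, ‖φ r‖ ^ 2 * r)

/-- Weighted `H¹` norm at angular frequency `k`. -/
def wH1 (k : ℤ) (φ : ℝ → ℂ) : ℝ :=
  Real.sqrt (∫ r in (0 : ℝ)..1, (‖deriv φ r‖ ^ 2 + (k : ℝ) ^ 2 / r ^ 2 * ‖φ r‖ ^ 2) * r)

/-- Weighted inner product `⟨φ,η⟩ = ∫₀¹ φ(r) conj(η(r)) r dr`. -/
def wInner (φ η : ℝ → ℂ) : ℂ :=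
  ∫ r in (0 : ℝ)..1, φ r * (starRingEnd ℂ) (η r) * (r : ℂ)

open Complex ComplexConjugate

theorem intervalIntegral.integral_mul_le_sqrt_mul_sqrt {a b : ℝ} (hab : a ≤ b) {u v : ℝ → ℝ}
    (hu₀ : 0 ≤ u) (hv₀ : 0 ≤ v) (hu : Continuous u) (hv : Continuous v) :
    ∫ x in a..b, u x * v x ≤ √(∫ x in a..b, u x ^ 2) * √(∫ x in a..b, v x ^ 2) := by
  have memLp_two {w : ℝ → ℝ} (hw : Continuous w) :
      MemLp w (ENNReal.ofReal 2) (volume.restrict (Set.Ioc a b)) := by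
    rw [ENNReal.ofReal_ofNat, memLp_two_iff_integrable_sq hw.aestronglyMeasurable]
    exact (hw.pow 2).integrableOn_Icc.mono_set Set.Ioc_subset_Icc_self
  simp only [integral_of_le hab, Real.sqrt_eq_rpow, ← Real.rpow_two]
  exact integral_mul_le_Lp_mul_Lq_of_nonneg Real.HolderConjugate.two_two
    (.of_forall hu₀) (.of_forall hv₀) (memLp_two hu) (memLp_two hv)

theorem norm_wInner_le_wL2_mul_wL2 {φ ψ : ℝ → ℂ} (hφ : Continuous φ) (hψ : Continuous ψ) :
    ‖wInner φ ψ‖ ≤ wL2 φ * wL2 ψ := by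
  have weighted_sq (χ : ℝ → ℂ) :
      ∫ r in (0 : ℝ)..1, (‖χ r‖ * √r) ^ 2 = ∫ r in (0 : ℝ)..1, ‖χ r‖ ^ 2 * r := by
    refine integral_congr fun r hr => ?_
    rw [Set.uIcc_of_le zero_le_one] at hr
    rw [mul_pow, Real.sq_sqrt hr.1]
  calc ‖wInner φ ψ‖ ≤ ∫ r in (0 : ℝ)..1, ‖φ r * conj (ψ r) * r‖ :=
        norm_integral_le_integral_norm zero_le_one
    _ = ∫ r in (0 : ℝ)..1, (‖φ r‖ * √r) * (‖ψ r‖ * √r) := by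
        refine integral_congr fun r hr => ?_
        rw [Set.uIcc_of_le zero_le_one] at hr
        simp only [norm_mul, RCLike.norm_conj, norm_real, Real.norm_of_nonneg hr.1]
        rw [mul_mul_mul_comm, Real.mul_self_sqrt hr.1]
    _ ≤ wL2 φ * wL2 ψ := by
        rw [wL2, wL2, ← weighted_sq, ← weighted_sq]
        exact integral_mul_le_sqrt_mul_sqrt zero_le_one (fun r => by positivity)
          (fun r => by positivity) (by fun_prop) (by fun_prop)

theorem wL2_le_wL2 {φ ψ : ℝ → ℂ} (hφ : Continuous φ) (hψ : Continuous ψ)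
    (h : ∀ r ∈ Set.Icc (0 : ℝ) 1, ‖φ r‖ ≤ ‖ψ r‖) : wL2 φ ≤ wL2 ψ := by
  refine Real.sqrt_le_sqrt (integral_mono_on zero_le_one ?_ ?_ fun r hr => ?_)
  · exact Continuous.intervalIntegrable (by fun_prop) 0 1
  · exact Continuous.intervalIntegrable (by fun_prop) 0 1
  · gcongr
    exacts [hr.1, h r hr]

theorem wL2_deriv_le_wH1 (k : ℤ) {f : ℝ → ℂ} (hf' : Continuous (deriv f))
    (hfH1 : IntervalIntegrable
      (fun r => (‖deriv f r‖ ^ 2 + (k : ℝ) ^ 2 / r ^ 2 * ‖f r‖ ^ 2) * r) volume 0 1) :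
    wL2 (deriv f) ≤ wH1 k f := by
  refine Real.sqrt_le_sqrt (integral_mono_on zero_le_one ?_ hfH1 fun r hr => ?_)
  · exact Continuous.intervalIntegrable (by fun_prop) 0 1
  · have : 0 ≤ (k : ℝ) ^ 2 / r ^ 2 * ‖f r‖ ^ 2 := by positivity
    exact mul_le_mul_of_nonneg_right (le_add_of_nonneg_right this) hr.1

-- Only `r ∈ (0, 1]` is seen, which disposes of the `1 / r` and `k² / r²` singularities of `Δ_k`
-- (junk values at `r = 0`).
theorem re_wInner_eq_integral_re {φ η F : ℝ → ℂ} (hF : Continuous F)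
    (h : ∀ r ∈ Set.Ioc (0 : ℝ) 1, φ r * conj (η r) * r = F r) :
    (wInner φ η).re = ∫ r in (0 : ℝ)..1, (F r).re := by
  rw [wInner, integral_congr_ae (.of_forall fun r hr =>
    h r (Set.uIoc_of_le (zero_le_one' ℝ) ▸ hr))]
  exact (intervalIntegral_re (hF.intervalIntegrable 0 1)).symm

theorem Complex.re_I_mul_mul_conj_self (z : ℂ) : (I * z * conj z).re = 0 := by
  rw [mul_assoc, mul_conj, I_mul_re, ofReal_im, neg_zero]

theorem hasDerivAt_re_I_mul_conj_deriv {f : ℝ → ℂ} {f'' : ℂ} {r : ℝ}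
    (hf : DifferentiableAt ℝ f r) (hf' : HasDerivAt (deriv f) f'' r) :
    HasDerivAt (fun x => (I * f x * conj (deriv f x)).re) (I * f r * conj f'').re r := by
  have hconj : HasDerivAt (fun x => conj (deriv f x)) (conj f'') r := hf'.star
  refine (reCLM.hasFDerivAt.comp_hasDerivAt r
    ((hf.hasDerivAt.const_mul I).mul hconj)).congr_deriv ?_
  rw [reCLM_apply, add_re, re_I_mul_mul_conj_self, zero_add]

theorem integral_rpow_succ_mul_deriv {α : ℝ} (hα : 0 ≤ α) {G G' : ℝ → ℝ}
    (hG : ∀ r, HasDerivAt G (G' r) r) (hG' : Continuous G') (hG₁ : G 1 = 0) :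
    ∫ r in (0 : ℝ)..1, r ^ (α + 1) * G' r = -(α + 1) * ∫ r in (0 : ℝ)..1, r ^ α * G r := by
  have hpow (r : ℝ) : HasDerivAt (fun x : ℝ => x ^ (α + 1)) ((α + 1) * r ^ α) r := by
    simpa using Real.hasDerivAt_rpow_const (x := r) (p := α + 1) (.inr (by linarith))
  rw [integral_mul_deriv_eq_deriv_mul (fun r _ => hpow r) (fun r _ => hG r)
    (Continuous.intervalIntegrable (by fun_prop) 0 1) (hG'.intervalIntegrable 0 1)]
  simp only [hG₁, Real.zero_rpow (by linarith : α + 1 ≠ 0), mul_assoc,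
    intervalIntegral.integral_const_mul]
  ring

theorem I_mul_rpow_mul_conj_radialLaplacian (α c : ℝ) {r : ℝ} (hr : 0 < r) (z a b : ℂ) :
    I * ((r ^ α : ℝ) : ℂ) * z * conj (a + 1 / (r : ℂ) * b - ((c / r ^ 2 : ℝ) : ℂ) * z) * r =
      ((r ^ (α + 1) : ℝ) : ℂ) * (I * z * conj a) + ((r ^ α : ℝ) : ℂ) * (I * z * conj b) -
        ((c * r ^ (α - 1) : ℝ) : ℂ) * (I * z * conj z) := by
  have hr' : (r : ℂ) ≠ 0 := ofReal_ne_zero.mpr hr.ne'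
  rw [Real.rpow_add_one hr.ne', Real.rpow_sub_one hr.ne']
  simp only [map_sub, map_add, map_mul, map_div₀, map_one, map_pow, conj_ofReal, ofReal_mul,
    ofReal_div, ofReal_pow]
  field_simp

theorem re_wInner_I_rpow_radialLaplacian {α : ℝ} (hα : 1 ≤ α) (c : ℝ) {f : ℝ → ℂ}
    (hf : ContDiff ℝ 2 f) (hbc : deriv f 1 = 0) :
    (wInner (fun r => I * ((r ^ α : ℝ) : ℂ) * f r)
        (fun r => deriv (deriv f) r + (1 / (r : ℂ)) * deriv f r - ((c / r ^ 2 : ℝ) : ℂ) * f r)).re =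
      -α * ∫ r in (0 : ℝ)..1, r ^ α * (I * f r * conj (deriv f r)).re := by
  have hf₀ : Continuous f := hf.continuous
  have hf' : ContDiff ℝ 1 (deriv f) := hf.deriv' (n := 1)
  have hf₁ : Continuous (deriv f) := hf'.continuous
  have hf₂ : Continuous (deriv (deriv f)) := hf'.continuous_deriv le_rfl
  have hG (r : ℝ) := hasDerivAt_re_I_mul_conj_deriv (hf.differentiable two_ne_zero r)
    (hf'.differentiable one_ne_zero r).hasDerivAt
  have hcont : Continuous fun r : ℝ =>
      ((r ^ (α + 1) : ℝ) : ℂ) * (I * f r * conj (deriv (deriv f) r))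
        + ((r ^ α : ℝ) : ℂ) * (I * f r * conj (deriv f r))
        - ((c * r ^ (α - 1) : ℝ) : ℂ) * (I * f r * conj (f r)) := by
    fun_prop (disch := linarith)
  rw [re_wInner_eq_integral_re hcont fun r hr =>
    I_mul_rpow_mul_conj_radialLaplacian α c hr.1 (f r) (deriv (deriv f) r) (deriv f r)]
  simp only [sub_re, add_re, re_ofReal_mul, re_I_mul_mul_conj_self, mul_zero, sub_zero]
  rw [intervalIntegral.integral_add
      (Continuous.intervalIntegrable (by fun_prop (disch := linarith)) 0 1)
      (Continuous.intervalIntegrable (by fun_prop (disch := linarith)) 0 1),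
    integral_rpow_succ_mul_deriv (by linarith) hG (by fun_prop) (by simp [hbc])]
  ring

theorem re_wInner_I_rpow_sub_one_deriv {α : ℝ} (hα : 1 ≤ α) {f : ℝ → ℂ} (hf : Continuous f)
    (hf' : Continuous (deriv f)) :
    (wInner (fun r => I * ((r ^ (α - 1) : ℝ) : ℂ) * f r) (deriv f)).re =
      ∫ r in (0 : ℝ)..1, r ^ α * (I * f r * conj (deriv f r)).re := by
  have hcont : Continuous fun r : ℝ => ((r ^ α : ℝ) : ℂ) * (I * f r * conj (deriv f r)) := by
    fun_prop (disch := linarith)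
  rw [re_wInner_eq_integral_re hcont fun r hr => ?_]
  · simp only [re_ofReal_mul]
  · rw [Real.rpow_sub_one hr.1.ne', ofReal_div]
    field_simp [ofReal_ne_zero.mpr hr.1.ne']

theorem abs_re_wInner_I_rpow_sub_one_deriv_le {α : ℝ} (hα : 1 ≤ α) (k : ℤ) {f : ℝ → ℂ}
    (hf : Continuous f) (hf' : Continuous (deriv f))
    (hfH1 : IntervalIntegrable
      (fun r => (‖deriv f r‖ ^ 2 + (k : ℝ) ^ 2 / r ^ 2 * ‖f r‖ ^ 2) * r) volume 0 1) :
    |(wInner (fun r => I * ((r ^ (α - 1) : ℝ) : ℂ) * f r) (deriv f)).re| ≤ wL2 f * wH1 k f := by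
  have hweight : ∀ r ∈ Set.Icc (0 : ℝ) 1, ‖I * ((r ^ (α - 1) : ℝ) : ℂ) * f r‖ ≤ ‖f r‖ := by
    intro r hr
    rw [norm_mul, norm_mul, norm_I, one_mul, norm_real,
      Real.norm_of_nonneg (Real.rpow_nonneg hr.1 _)]
    exact mul_le_of_le_one_left (norm_nonneg _) (Real.rpow_le_one hr.1 hr.2 (by linarith))
  calc _ ≤ ‖wInner (fun r => I * ((r ^ (α - 1) : ℝ) : ℂ) * f r) (deriv f)‖ := abs_re_le_norm _
    _ ≤ _ := norm_wInner_le_wL2_mul_wL2 (by fun_prop (disch := linarith)) hf'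
    _ ≤ wL2 f * wH1 k f :=
      mul_le_mul (wL2_le_wL2 (by fun_prop (disch := linarith)) hf hweight)
        (wL2_deriv_le_wH1 k hf' hfH1) (Real.sqrt_nonneg _) (Real.sqrt_nonneg _)

theorem spiral_commutator_bound_general
    (α : ℝ) (hα : 1 ≤ α) (k : ℤ)
    (f : ℝ → ℂ) (hf : ContDiff ℝ 2 f)
    -- finite `H¹` norm
    (hfH1 : IntervalIntegrable
      (fun r => (‖deriv f r‖ ^ 2 + (k : ℝ) ^ 2 / r ^ 2 * ‖f r‖ ^ 2) * r) volume 0 1)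
    -- no-flux boundary condition
    (hbc : deriv f 1 = 0) :
    (wInner (fun r => Complex.I * ((r ^ α : ℝ) : ℂ) * f r)
        (fun r => deriv (deriv f) r + (1 / (r : ℂ)) * deriv f r -
          (((k : ℝ) ^ 2 / r ^ 2 : ℝ) : ℂ) * f r)).re =
      -α * (wInner (fun r => Complex.I * ((r ^ (α - 1) : ℝ) : ℂ) * f r)
        (fun r => deriv f r)).re ∧
    |(wInner (fun r => Complex.I * ((r ^ α : ℝ) : ℂ) * f r)
        (fun r => deriv (deriv f) r + (1 / (r : ℂ)) * deriv f r -
          (((k : ℝ) ^ 2 / r ^ 2 : ℝ) : ℂ) * f r)).re| ≤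
      α * wL2 f * wH1 k f := by
  have hf' : Continuous (deriv f) := hf.continuous_deriv one_le_two
  have hidentity := (re_wInner_I_rpow_radialLaplacian hα ((k : ℝ) ^ 2) hf hbc).trans
    (congrArg _ (re_wInner_I_rpow_sub_one_deriv hα hf.continuous hf').symm)
  refine ⟨hidentity, ?_⟩
  rw [hidentity, abs_mul, abs_neg, abs_of_nonneg (by linarith), mul_assoc]
  exact mul_le_mul_of_nonneg_left
    (abs_re_wInner_I_rpow_sub_one_deriv_le hα k hf.continuous hf' hfH1) (by linarith)

theorem spiral_commutator_bound
    (α : ℝ) (hα : 1 ≤ α) (k : ℤ) (hk : k ≠ 0)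
    (f : ℝ → ℂ) (hf : ContDiff ℝ 2 f)
    -- finite `H¹` norm
    (hfH1 : IntervalIntegrable
      (fun r => (‖deriv f r‖ ^ 2 + (k : ℝ) ^ 2 / r ^ 2 * ‖f r‖ ^ 2) * r) volume 0 1)
    -- no-flux boundary condition
    (hbc : deriv f 1 = 0) :
    (wInner (fun r => Complex.I * ((r ^ α : ℝ) : ℂ) * f r)
        (fun r => deriv (deriv f) r + (1 / (r : ℂ)) * deriv f r -
          (((k : ℝ) ^ 2 / r ^ 2 : ℝ) : ℂ) * f r)).re =
      -α * (wInner (fun r => Complex.I * ((r ^ (α - 1) : ℝ) : ℂ) * f r)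
        (fun r => deriv f r)).re ∧
    |(wInner (fun r => Complex.I * ((r ^ α : ℝ) : ℂ) * f r)
        (fun r => deriv (deriv f) r + (1 / (r : ℂ)) * deriv f r -
          (((k : ℝ) ^ 2 / r ^ 2 : ℝ) : ℂ) * f r)).re| ≤
      α * wL2 f * wH1 k f :=
  spiral_commutator_bound_general α hα k f hf hfH1 hbc

end
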